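/- arXiv:2203.07019 — 2 statements merged into one kernel-verified Lean document; each statement's English description precedes it below -/
import Mathlib

section
/- In the setting of the preceding identity, J(ξ, m, ℙ) ≤ E^{ℙ₀}[Y₀] for all ℙ ∈ P₂(μ₀), with equality if and only if β^ℙ = β^{P̂}, Leb⊗ℙ-a.e.; in particular the measure P̂ attains the supremum V₀(ξ,m) = sup_{ℙ∈P₂(μ₀)} J(ξ,m,ℙ) and V₀(ξ,m) = E^{ℙ₀}[Y₀]. -/
open MeasureTheory

/-- In the setting of the preceding identity (Statement 3),
`J(ξ,m,ℙ) ≤ E^{ℙ₀}[Y₀]` for all `ℙ ∈ P₂(μ₀)`, with equality iff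
`β^ℙ = β^{P̂}` Leb⊗ℙ-a.e.; in particular `P̂` attains the supremum
`V₀(ξ,m) = sup_{ℙ∈P₂(μ₀)} J(ξ,m,ℙ)` and `V₀(ξ,m) = E^{ℙ₀}[Y₀]`.

`P₂` is the family of admissible measures, `β ℙ` the Girsanov drift of `ℙ`,
`J ℙ := E^ℙ[ξ - ∫₀¹(½|β^ℙ|² + f_s(m_s))ds]`, and `hJ` is the identity of
Statement 3. -/
theorem stmt_4 {d : ℕ} {Ω : Type*} {m0 : MeasurableSpace Ω}
    (ℙ₀ : Measure Ω) [IsProbabilityMeasure ℙ₀]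
    (P₂ : Set (Measure Ω))
    (hP₂prob : ∀ ℙ ∈ P₂, IsProbabilityMeasure ℙ)
    (hP₂equiv : ∀ ℙ ∈ P₂, ℙ ≪ ℙ₀ ∧ ℙ₀ ≪ ℙ)
    (β : Measure Ω → ℝ → Ω → EuclideanSpace ℝ (Fin d))
    (βhat : ℝ → Ω → EuclideanSpace ℝ (Fin d))
    (hβmeas : ∀ ℙ ∈ P₂, Measurable (Function.uncurry (β ℙ)))
    (hβhatmeas : Measurable (Function.uncurry βhat))
    (Phat : Measure Ω) (hPhat : Phat ∈ P₂)
    (hβPhat : β Phat = βhat)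
    (Y₀ : Ω → ℝ) (hY₀int : Integrable Y₀ ℙ₀)
    (J : Measure Ω → ℝ)
    -- the identity of Statement 3, valid for every ℙ ∈ P₂
    (hJ : ∀ ℙ ∈ P₂, J ℙ = ∫ ω, Y₀ ω ∂ℙ₀
      - (1 / 2) * ∫ ω, (∫ s in Set.Ioc (0 : ℝ) 1, ‖β ℙ s ω - βhat s ω‖ ^ 2) ∂ℙ)
    (hsqint : ∀ ℙ ∈ P₂,
      Integrable (fun ω => ∫ s in Set.Ioc (0 : ℝ) 1, ‖β ℙ s ω - βhat s ω‖ ^ 2) ℙ)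
    (hloc : ∀ ℙ ∈ P₂, ∀ᵐ ω ∂ℙ,
      IntegrableOn (fun s => ‖β ℙ s ω - βhat s ω‖ ^ 2) (Set.Ioc (0 : ℝ) 1)) :
    (∀ ℙ ∈ P₂, J ℙ ≤ ∫ ω, Y₀ ω ∂ℙ₀) ∧
    (∀ ℙ ∈ P₂, J ℙ = ∫ ω, Y₀ ω ∂ℙ₀ ↔
      (fun p : ℝ × Ω => β ℙ p.1 p.2)
        =ᵐ[(volume.restrict (Set.Ioc (0 : ℝ) 1)).prod ℙ]
      (fun p : ℝ × Ω => βhat p.1 p.2)) ∧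
    IsGreatest (J '' P₂) (∫ ω, Y₀ ω ∂ℙ₀) ∧
    J Phat = ∫ ω, Y₀ ω ∂ℙ₀ := by

  -- auxiliary facts for each ℙ ∈ P₂
  have main : ∀ ℙ ∈ P₂, (J ℙ ≤ ∫ ω, Y₀ ω ∂ℙ₀) ∧
      (J ℙ = ∫ ω, Y₀ ω ∂ℙ₀ ↔
        (fun p : ℝ × Ω => β ℙ p.1 p.2)
          =ᵐ[(volume.restrict (Set.Ioc (0 : ℝ) 1)).prod ℙ]
        (fun p : ℝ × Ω => βhat p.1 p.2)) := by
    intro ℙ hℙ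
    haveI := hP₂prob ℙ hℙ
    set g : Ω → ℝ := fun ω => ∫ s in Set.Ioc (0 : ℝ) 1, ‖β ℙ s ω - βhat s ω‖ ^ 2 with hg
    have hg0 : 0 ≤ g := fun ω => integral_nonneg (fun s => sq_nonneg _)
    have hI0 : 0 ≤ ∫ ω, g ω ∂ℙ := integral_nonneg hg0
    have hJeq := hJ ℙ hℙ
    have hle : J ℙ ≤ ∫ ω, Y₀ ω ∂ℙ₀ := by rw [hJeq]; linarith
    refine ⟨hle, ?_⟩
    -- the measurable "difference" set
    have hDset : MeasurableSet {p : ℝ × Ω | β ℙ p.1 p.2 = βhat p.1 p.2} := by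
      have := measurableSet_eq_fun (hβmeas ℙ hℙ) hβhatmeas
      simpa [Function.uncurry] using this
    have hDc : MeasurableSet {p : ℝ × Ω | ¬ β ℙ p.1 p.2 = βhat p.1 p.2} :=
      hDset.compl
    have hIiff : J ℙ = ∫ ω, Y₀ ω ∂ℙ₀ ↔ (∫ ω, g ω ∂ℙ) = 0 := by
      rw [hJeq]; constructor
      · intro h; linarith
      · intro h; rw [h]; ring
    have hgiff : (∫ ω, g ω ∂ℙ) = 0 ↔ g =ᵐ[ℙ] 0 :=
      integral_eq_zero_iff_of_nonneg hg0 (hsqint ℙ hℙ)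
    rw [hIiff, hgiff]
    constructor
    · -- g = 0 a.e. ⇒ a.e. equality on the product
      intro hgz
      have hae : ∀ᵐ ω ∂ℙ, (volume.restrict (Set.Ioc (0:ℝ) 1))
          ((fun s => (s, ω)) ⁻¹' {p : ℝ × Ω | ¬ β ℙ p.1 p.2 = βhat p.1 p.2}) = 0 := by
        filter_upwards [hgz, hloc ℙ hℙ] with ω hω hint
        have h0 : (∫ s in Set.Ioc (0:ℝ) 1, ‖β ℙ s ω - βhat s ω‖ ^ 2) = 0 := hω
        have := (integral_eq_zero_iff_of_nonneg (fun s => sq_nonneg _) hint).mp h0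
        have heq : ∀ᵐ s ∂(volume.restrict (Set.Ioc (0:ℝ) 1)), β ℙ s ω = βhat s ω := by
          filter_upwards [this] with s hs
          have h2 : ‖β ℙ s ω - βhat s ω‖ ^ 2 = 0 := hs
          have h1 : ‖β ℙ s ω - βhat s ω‖ = 0 := by
            nlinarith [norm_nonneg (β ℙ s ω - βhat s ω)]
          exact sub_eq_zero.mp (norm_eq_zero.mp h1)
        rw [ae_iff] at heq
        exact heq
      have hnull : ((volume.restrict (Set.Ioc (0:ℝ) 1)).prod ℙ)
          {p : ℝ × Ω | ¬ β ℙ p.1 p.2 = βhat p.1 p.2} = 0 := by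
        rw [Measure.prod_apply_symm hDc]
        rw [lintegral_eq_zero_iff (measurable_measure_prodMk_right hDc)]
        filter_upwards [hae] with ω hω
        exact hω
      exact hnull
    · -- converse
      intro hprod
      have hnull : ((volume.restrict (Set.Ioc (0:ℝ) 1)).prod ℙ)
          {p : ℝ × Ω | ¬ β ℙ p.1 p.2 = βhat p.1 p.2} = 0 := hprod
      rw [Measure.prod_apply_symm hDc] at hnull
      have hmeas : Measurable fun ω => (volume.restrict (Set.Ioc (0:ℝ) 1))
          ((fun s => (s, ω)) ⁻¹' {p : ℝ × Ω | ¬ β ℙ p.1 p.2 = βhat p.1 p.2}) :=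
        measurable_measure_prodMk_right hDc
      have hae := (lintegral_eq_zero_iff hmeas).mp hnull
      filter_upwards [hae, hloc ℙ hℙ] with ω hω hint
      have heq : ∀ᵐ s ∂(volume.restrict (Set.Ioc (0:ℝ) 1)), β ℙ s ω = βhat s ω := by
        rw [ae_iff]
        exact hω
      have : g ω = ∫ s in Set.Ioc (0:ℝ) 1, (0:ℝ) := by
        refine integral_congr_ae ?_
        filter_upwards [heq] with s hs
        simp [hs]
      simpa using this
  have hPhatEq : J Phat = ∫ ω, Y₀ ω ∂ℙ₀ := by
    have := hJ Phat hPhat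
    rw [this, hβPhat]
    simp
  refine ⟨fun ℙ hℙ => (main ℙ hℙ).1, fun ℙ hℙ => (main ℙ hℙ).2, ?_, hPhatEq⟩
  constructor
  · exact ⟨Phat, hPhat, hPhatEq⟩
  · rintro x ⟨ℙ, hℙ, rfl⟩
    exact (main ℙ hℙ).1
end

section
/- Let π ∈ Π(μ₀,μ₁) be equivalent to ρ = ℙ₀∘(X₀,X₁)^{-1} with ζ := (dπ/dρ)(X₀,X₁) satisfying E^{ℙ₀}[|ln ζ| + ζ²] < ∞, and let P̂ be defined by dP̂/dℙ₀ = ζ. Then P̂ is the unique minimizer of the relative entropy H(· | ℙ₀) over the set P_π := { ℙ ∈ P₂(μ₀,μ₁) : ℙ∘(X₀,X₁)^{-1} = π }, and its minimal value is H(P̂ | ℙ₀) = H(π | ρ). -/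
/-!
`P̂` keeps the conditional law of `ℙ₀` given `(X₀, X₁)` and only changes the law of
`(X₀, X₁)` to `π`, so `ln (dP̂/dℙ₀) = ln ζ` is a function of `(X₀, X₁)`. Hence it has the same
mean `H(π|ρ)` under every `P` with `P∘(X₀,X₁)⁻¹ = π`, including `P̂` itself, which gives the
Pythagorean identity `H(P|ℙ₀) = H(P|P̂) + H(P̂|ℙ₀)`. Gibbs' inequality `H(P|P̂) ≥ 0`, with
equality only for `P = P̂`, yields minimality and uniqueness. The moment condition on `ζ` makes
`H(P̂|ℙ₀) = ∫ ζ ln ζ dℙ₀` finite, since `ζ |ln ζ| ≤ |ln ζ| + ζ²`, so it can be cancelled.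
-/

open MeasureTheory
open scoped ENNReal

/-- Relative entropy `H(μ|ν) := ∫ ln(dμ/dν) dμ` if `μ ≪ ν` (with the integral
well defined), and `+∞` otherwise. -/
noncomputable def relEnt {Ω : Type*} [MeasurableSpace Ω] (μ ν : Measure Ω) : ℝ≥0∞ :=
  open Classical in
  if μ ≪ ν ∧ Integrable (llr μ ν) μ then ENNReal.ofReal (∫ ω, llr μ ν ω ∂μ) else ⊤

open InformationTheory Set

section KullbackLeibler

variable {α : Type*} {mα : MeasurableSpace α}

lemma relEnt_eq_klDiv {μ ν : Measure α} (h : μ univ = ν univ) : relEnt μ ν = klDiv μ ν := by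
  unfold relEnt
  split_ifs with hμν
  · simp [klDiv_of_ac_of_integrable hμν.1 hμν.2, measureReal_def, h]
  · exact (klDiv_eq_top_iff.2 fun h₁ h₂ => hμν ⟨h₁, h₂⟩).symm

lemma llr_ae_eq_llr_add_llr {μ ν κ : Measure α} [SigmaFinite μ] [SigmaFinite ν] [SigmaFinite κ]
    (hμν : μ ≪ ν) (hνκ : ν ≪ κ) : llr μ κ =ᵐ[μ] fun x => llr μ ν x + llr ν κ x := by
  filter_upwards [(hμν.trans hνκ).ae_le (Measure.rnDeriv_mul_rnDeriv (κ := κ) hμν),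
    Measure.rnDeriv_pos hμν, hμν.ae_le (Measure.rnDeriv_lt_top μ ν),
    hμν.ae_le (Measure.rnDeriv_pos hνκ), hμν.ae_le (hνκ.ae_le (Measure.rnDeriv_lt_top ν κ))]
    with x hmul h₁ h₁' h₂ h₂'
  simp only [llr_def]
  rw [← hmul, Pi.mul_apply, ENNReal.toReal_mul,
    Real.log_mul (ENNReal.toReal_pos h₁.ne' h₁'.ne).ne' (ENNReal.toReal_pos h₂.ne' h₂'.ne).ne']

lemma klDiv_eq_klDiv_add_klDiv {μ ν κ : Measure α}
    [IsFiniteMeasure μ] [IsFiniteMeasure ν] [IsFiniteMeasure κ]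
    (hμν : μ ≪ ν) (hνκ : ν ≪ κ) (hμ : Integrable (llr ν κ) μ) (hν : Integrable (llr ν κ) ν)
    (h_eq : ∫ x, llr ν κ x ∂μ = ∫ x, llr ν κ x ∂ν) :
    klDiv μ κ = klDiv μ ν + klDiv ν κ := by
  have hllr := llr_ae_eq_llr_add_llr hμν hνκ
  by_cases hint : Integrable (llr μ ν) μ
  · have hint' : Integrable (llr μ κ) μ := (hint.add hμ).congr hllr.symm
    rw [klDiv_of_ac_of_integrable (hμν.trans hνκ) hint', klDiv_of_ac_of_integrable hμν hint,
      klDiv_of_ac_of_integrable hνκ hν, ← ENNReal.ofReal_add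
        (integral_llr_add_sub_measure_univ_nonneg hμν hint)
        (integral_llr_add_sub_measure_univ_nonneg hνκ hν),
      integral_congr_ae hllr, integral_add hint hμ, h_eq]
    congr 1
    ring
  · have hint' : ¬ Integrable (llr μ κ) μ := fun h =>
      hint ((h.sub hμ).congr (by filter_upwards [hllr] with x hx; simp [hx]))
    rw [klDiv_of_not_integrable hint, klDiv_of_not_integrable hint', top_add]

lemma mul_abs_log_le_abs_log_add_sq (x : ℝ) : x * |Real.log x| ≤ |Real.log x| + x ^ 2 := by
  rcases le_or_gt x 1 with h | h
  · nlinarith [abs_nonneg (Real.log x)]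
  · rw [abs_of_nonneg (Real.log_nonneg h.le)]
    nlinarith [Real.log_le_sub_one_of_pos (zero_lt_one.trans h)]

lemma integrable_log_and_sq_of_integrable_abs_log_add_sq {μ : Measure α} {f : α → ℝ} (hf : Measurable f)
    (h : Integrable (fun x => |Real.log (f x)| + f x ^ 2) μ) :
    Integrable (fun x => Real.log (f x)) μ ∧ Integrable (fun x => f x ^ 2) μ :=
  ⟨h.mono' hf.log.aestronglyMeasurable
      (ae_of_all _ fun _ => (Real.norm_eq_abs _).trans_le (le_add_of_nonneg_right (sq_nonneg _))),
    h.mono' (hf.pow_const 2).aestronglyMeasurable (ae_of_all _ fun _ => by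
      rw [Real.norm_eq_abs, abs_sq]
      exact le_add_of_nonneg_left (abs_nonneg _))⟩

lemma integrable_llr_of_integrable_abs_log_add_sq {μ ν : Measure α} [IsFiniteMeasure μ] [SigmaFinite ν] (hμν : μ ≪ ν)
    (h : Integrable (fun x => |Real.log (μ.rnDeriv ν x).toReal| + (μ.rnDeriv ν x).toReal ^ 2) ν) :
    Integrable (llr μ ν) μ := by
  refine (integrable_rnDeriv_mul_log_iff hμν).1 (h.mono' (by fun_prop) (ae_of_all _ fun x => ?_))
  rw [Real.norm_eq_abs, abs_mul, abs_of_nonneg ENNReal.toReal_nonneg]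
  exact mul_abs_log_le_abs_log_add_sq _

end KullbackLeibler

section Reweight

variable {Ω β : Type*} {mΩ : MeasurableSpace Ω} {mβ : MeasurableSpace β}
  {ν : Measure Ω} {T : Ω → β} {π : Measure β}

/-- The measure with law `π` under `T` and the same conditional law given `T` as `ν`. -/
noncomputable def reweight (ν : Measure Ω) (T : Ω → β) (π : Measure β) : Measure Ω :=
  ν.withDensity fun ω => π.rnDeriv (ν.map T) (T ω)

lemma measurable_rnDeriv_comp (hT : Measurable T) :
    Measurable fun ω => π.rnDeriv (ν.map T) (T ω) :=
  (Measure.measurable_rnDeriv _ _).comp hT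

lemma reweight_absolutelyContinuous : reweight ν T π ≪ ν :=
  withDensity_absolutelyContinuous _ _

lemma absolutelyContinuous_reweight [IsFiniteMeasure ν] [SigmaFinite π] (hT : Measurable T)
    (h : ν.map T ≪ π) : ν ≪ reweight ν T π :=
  withDensity_absolutelyContinuous' (measurable_rnDeriv_comp hT).aemeasurable
    (ae_of_ae_map hT.aemeasurable ((Measure.rnDeriv_pos' h).mono fun _ hx => hx.ne'))

lemma withDensity_ofReal_toReal_eq_reweight [SigmaFinite π] (hT : Measurable T) :
    ν.withDensity (fun ω => ENNReal.ofReal (π.rnDeriv (ν.map T) (T ω)).toReal)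
      = reweight ν T π :=
  withDensity_congr_ae (ae_of_ae_map hT.aemeasurable
    ((Measure.rnDeriv_lt_top _ _).mono fun _ hx => ENNReal.ofReal_toReal hx.ne))

lemma map_reweight [IsFiniteMeasure ν] [SigmaFinite π] (hT : Measurable T) (hπ : π ≪ ν.map T) :
    (reweight ν T π).map T = π := by
  ext s hs
  rw [Measure.map_apply hT hs, reweight, withDensity_apply _ (hT hs),
    ← setLIntegral_map hs (Measure.measurable_rnDeriv _ _) hT, ← withDensity_apply _ hs,
    Measure.withDensity_rnDeriv_eq π _ hπ]

lemma isFiniteMeasure_reweight [IsFiniteMeasure ν] [IsFiniteMeasure π] (hT : Measurable T)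
    (hπ : π ≪ ν.map T) : IsFiniteMeasure (reweight ν T π) := by
  refine ⟨?_⟩
  rw [← preimage_univ (f := T), ← Measure.map_apply hT MeasurableSet.univ, map_reweight hT hπ]
  exact measure_lt_top π univ

lemma isProbabilityMeasure_reweight [IsFiniteMeasure ν] [IsProbabilityMeasure π]
    (hT : Measurable T) (hπ : π ≪ ν.map T) : IsProbabilityMeasure (reweight ν T π) := by
  have : IsProbabilityMeasure ((reweight ν T π).map T) := by rw [map_reweight hT hπ]; infer_instance
  exact Measure.isProbabilityMeasure_of_map T

lemma rnDeriv_reweight [SigmaFinite ν] (hT : Measurable T) :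
    (reweight ν T π).rnDeriv ν =ᵐ[ν] fun ω => π.rnDeriv (ν.map T) (T ω) :=
  Measure.rnDeriv_withDensity ν (measurable_rnDeriv_comp hT)

lemma llr_reweight [SigmaFinite ν] (hT : Measurable T) :
    llr (reweight ν T π) ν =ᵐ[ν] fun ω => llr π (ν.map T) (T ω) := by
  filter_upwards [rnDeriv_reweight (π := π) hT] with ω hω
  simp only [llr_def, hω]

lemma integrable_llr_reweight_iff [SigmaFinite ν] {Q : Measure Ω} (hT : Measurable T)
    (hQ : Q ≪ ν) (hQT : Q.map T = π) :
    Integrable (llr (reweight ν T π) ν) Q ↔ Integrable (llr π (ν.map T)) π := by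
  rw [integrable_congr (hQ.ae_le (llr_reweight hT)), ← hQT,
    integrable_map_measure (stronglyMeasurable_llr _ _).aestronglyMeasurable hT.aemeasurable]
  rfl

lemma integral_llr_reweight [SigmaFinite ν] {Q : Measure Ω} (hT : Measurable T)
    (hQ : Q ≪ ν) (hQT : Q.map T = π) :
    ∫ ω, llr (reweight ν T π) ν ω ∂Q = ∫ x, llr π (ν.map T) x ∂π := by
  rw [integral_congr_ae (hQ.ae_le (llr_reweight hT)), ← hQT,
    integral_map hT.aemeasurable (stronglyMeasurable_llr _ _).aestronglyMeasurable]

lemma klDiv_reweight [IsFiniteMeasure ν] [SigmaFinite π] (hT : Measurable T) (hπ : π ≪ ν.map T) :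
    klDiv (reweight ν T π) ν = klDiv π (ν.map T) := by
  have hmap := map_reweight hT hπ
  have hint := integrable_llr_reweight_iff hT reweight_absolutelyContinuous hmap
  by_cases h : Integrable (llr π (ν.map T)) π
  · rw [klDiv_of_ac_of_integrable reweight_absolutelyContinuous (hint.2 h),
      klDiv_of_ac_of_integrable hπ h,
      integral_llr_reweight hT reweight_absolutelyContinuous hmap]
    have hreal (μ : Measure Ω) : (μ.map T).real univ = μ.real univ := by
      rw [map_measureReal_apply hT MeasurableSet.univ, preimage_univ]
    rw [hreal, ← hreal (reweight ν T π), hmap]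
  · rw [klDiv_of_not_integrable h, klDiv_of_not_integrable (mt hint.1 h)]

lemma klDiv_eq_klDiv_reweight_add [IsFiniteMeasure ν] [IsFiniteMeasure π] (hT : Measurable T)
    (hπ : π ≪ ν.map T) (hint : Integrable (llr π (ν.map T)) π) {Q : Measure Ω}
    [IsFiniteMeasure Q] (hQ : Q ≪ reweight ν T π) (hQT : Q.map T = π) :
    klDiv Q ν = klDiv Q (reweight ν T π) + klDiv (reweight ν T π) ν := by
  have := isFiniteMeasure_reweight hT hπ
  have hQν := hQ.trans reweight_absolutelyContinuous
  refine klDiv_eq_klDiv_add_klDiv hQ reweight_absolutelyContinuous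
    ((integrable_llr_reweight_iff hT hQν hQT).2 hint)
    ((integrable_llr_reweight_iff hT reweight_absolutelyContinuous (map_reweight hT hπ)).2 hint) ?_
  rw [integral_llr_reweight hT hQν hQT,
    integral_llr_reweight hT reweight_absolutelyContinuous (map_reweight hT hπ)]

section Minimality

variable [IsFiniteMeasure ν] [IsFiniteMeasure π] {Q : Measure Ω} [IsFiniteMeasure Q]

lemma klDiv_reweight_le (hT : Measurable T) (hπ : π ≪ ν.map T)
    (hint : Integrable (llr π (ν.map T)) π) (hQ : Q ≪ reweight ν T π) (hQT : Q.map T = π) :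
    klDiv (reweight ν T π) ν ≤ klDiv Q ν := by
  rw [klDiv_eq_klDiv_reweight_add hT hπ hint hQ hQT]
  exact le_add_self

lemma eq_reweight_of_klDiv_eq (hT : Measurable T) (hπ : π ≪ ν.map T)
    (hint : Integrable (llr π (ν.map T)) π) (hQ : Q ≪ reweight ν T π) (hQT : Q.map T = π)
    (h : klDiv Q ν = klDiv (reweight ν T π) ν) : Q = reweight ν T π := by
  have := isFiniteMeasure_reweight hT hπ
  have hfin : klDiv (reweight ν T π) ν ≠ ∞ := by
    rw [klDiv_reweight hT hπ]
    exact klDiv_ne_top hπ hint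
  rw [klDiv_eq_klDiv_reweight_add hT hπ hint hQ hQT] at h
  exact klDiv_eq_zero_iff.1 ((ENNReal.add_left_inj hfin).1 (h.trans (zero_add _).symm))

end Minimality

end Reweight

theorem stmt_9_general {d : ℕ} {Ω : Type*} {m0 : MeasurableSpace Ω}
    (ℙ₀ : Measure Ω) [IsProbabilityMeasure ℙ₀]
    (μ₀ μ₁ : Measure (EuclideanSpace ℝ (Fin d)))
    (X0 X1 : Ω → EuclideanSpace ℝ (Fin d))
    (hX0 : Measurable X0) (hX1 : Measurable X1)
    (ρ π : Measure (EuclideanSpace ℝ (Fin d) × EuclideanSpace ℝ (Fin d)))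
    [IsProbabilityMeasure π]
    (hρ : ρ = ℙ₀.map (fun ω => (X0 ω, X1 ω)))
    (hequiv : π ≪ ρ ∧ ρ ≪ π)
    (hπ0 : π.map Prod.fst = μ₀) (hπ1 : π.map Prod.snd = μ₁)
    (ζ : Ω → ℝ)
    (hζ : ζ = fun ω => (π.rnDeriv ρ (X0 ω, X1 ω)).toReal)
    (hζint : Integrable (fun ω => |Real.log (ζ ω)| + ζ ω ^ 2) ℙ₀)
    (Phat : Measure Ω)
    (hPhat : Phat = ℙ₀.withDensity (fun ω => ENNReal.ofReal (ζ ω)))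
    -- the set `P₂(μ₀,μ₁)` and its subset `P_π`
    (P₂ Pπ : Set (Measure Ω))
    (hP₂ : P₂ = {P : Measure Ω | IsProbabilityMeasure P ∧ (P ≪ ℙ₀ ∧ ℙ₀ ≪ P)
      ∧ P.map X0 = μ₀ ∧ P.map X1 = μ₁
      ∧ Integrable (fun ω => Real.log ((P.rnDeriv ℙ₀ ω).toReal)) ℙ₀
      ∧ Integrable (fun ω => ((P.rnDeriv ℙ₀ ω).toReal) ^ 2) ℙ₀})
    (hPπ : Pπ = {P ∈ P₂ | P.map (fun ω => (X0 ω, X1 ω)) = π}) :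
    Phat ∈ Pπ ∧
    relEnt Phat ℙ₀ = relEnt π ρ ∧
    (∀ P ∈ Pπ, relEnt Phat ℙ₀ ≤ relEnt P ℙ₀) ∧
    (∀ P ∈ Pπ, relEnt P ℙ₀ = relEnt Phat ℙ₀ → P = Phat) := by
  subst hρ hζ hPhat hPπ hP₂
  obtain ⟨hπρ, hρπ⟩ := hequiv
  set T : Ω → EuclideanSpace ℝ (Fin d) × EuclideanSpace ℝ (Fin d) := fun ω => (X0 ω, X1 ω)
  have hT : Measurable T := hX0.prodMk hX1
  rw [withDensity_ofReal_toReal_eq_reweight hT]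
  have hmap := map_reweight hT hπρ
  have : IsProbabilityMeasure (ℙ₀.map T) := Measure.isProbabilityMeasure_map hT.aemeasurable
  have hprob := isProbabilityMeasure_reweight hT hπρ
  have hbound : Integrable (fun ω => |Real.log ((reweight ℙ₀ T π).rnDeriv ℙ₀ ω).toReal|
      + ((reweight ℙ₀ T π).rnDeriv ℙ₀ ω).toReal ^ 2) ℙ₀ :=
    hζint.congr ((rnDeriv_reweight (π := π) hT).mono fun _ hx => by simp only [hx]; rfl)
  have hint : Integrable (llr π (ℙ₀.map T)) π :=
    (integrable_llr_reweight_iff hT reweight_absolutelyContinuous hmap).1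
      (integrable_llr_of_integrable_abs_log_add_sq reweight_absolutelyContinuous hbound)
  refine ⟨⟨⟨hprob, ⟨reweight_absolutelyContinuous, absolutelyContinuous_reweight hT hρπ⟩, ?_, ?_,
    integrable_log_and_sq_of_integrable_abs_log_add_sq
      (Measure.measurable_rnDeriv _ _).ennreal_toReal hbound⟩, hmap⟩, ?_, ?_, ?_⟩
  · rw [show X0 = Prod.fst ∘ T from rfl, ← Measure.map_map measurable_fst hT, hmap, hπ0]
  · rw [show X1 = Prod.snd ∘ T from rfl, ← Measure.map_map measurable_snd hT, hmap, hπ1]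
  · rw [relEnt_eq_klDiv (by simp), relEnt_eq_klDiv (by simp), klDiv_reweight hT hπρ]
  · rintro P ⟨⟨hP, ⟨hPℙ₀, -⟩, -⟩, hPT⟩
    rw [relEnt_eq_klDiv (by simp), relEnt_eq_klDiv (by simp)]
    exact klDiv_reweight_le hT hπρ hint (hPℙ₀.trans (absolutelyContinuous_reweight hT hρπ)) hPT
  · rintro P ⟨⟨hP, ⟨hPℙ₀, -⟩, -⟩, hPT⟩ hPeq
    rw [relEnt_eq_klDiv (by simp), relEnt_eq_klDiv (by simp)] at hPeq
    exact eq_reweight_of_klDiv_eq hT hπρ hint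
      (hPℙ₀.trans (absolutelyContinuous_reweight hT hρπ)) hPT hPeq

/-- With `π ∈ Π(μ₀,μ₁)` equivalent to `ρ = ℙ₀∘(X₀,X₁)⁻¹`,
`ζ := (dπ/dρ)(X₀,X₁)` satisfying `E^{ℙ₀}[|ln ζ| + ζ²] < ∞`, and `P̂` defined by
`dP̂/dℙ₀ = ζ`, the measure `P̂` is the unique minimizer of `H(·|ℙ₀)` over
`P_π := {P ∈ P₂(μ₀,μ₁) : P∘(X₀,X₁)⁻¹ = π}`, with minimal value
`H(P̂|ℙ₀) = H(π|ρ)`. -/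
theorem stmt_9 {d : ℕ} {Ω : Type*} {m0 : MeasurableSpace Ω}
    (ℙ₀ : Measure Ω) [IsProbabilityMeasure ℙ₀]
    (μ₀ μ₁ : Measure (EuclideanSpace ℝ (Fin d)))
    [IsProbabilityMeasure μ₀] [IsProbabilityMeasure μ₁]
    (X0 X1 : Ω → EuclideanSpace ℝ (Fin d))
    (hX0 : Measurable X0) (hX1 : Measurable X1)
    (hμ₀ : ℙ₀.map X0 = μ₀)
    (ρ π : Measure (EuclideanSpace ℝ (Fin d) × EuclideanSpace ℝ (Fin d)))
    [IsProbabilityMeasure π]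
    (hρ : ρ = ℙ₀.map (fun ω => (X0 ω, X1 ω)))
    (hequiv : π ≪ ρ ∧ ρ ≪ π)
    (hπ0 : π.map Prod.fst = μ₀) (hπ1 : π.map Prod.snd = μ₁)
    (ζ : Ω → ℝ)
    (hζ : ζ = fun ω => (π.rnDeriv ρ (X0 ω, X1 ω)).toReal)
    (hζint : Integrable (fun ω => |Real.log (ζ ω)| + ζ ω ^ 2) ℙ₀)
    (Phat : Measure Ω)
    (hPhat : Phat = ℙ₀.withDensity (fun ω => ENNReal.ofReal (ζ ω)))
    -- the set `P₂(μ₀,μ₁)` and its subset `P_π`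
    (P₂ Pπ : Set (Measure Ω))
    (hP₂ : P₂ = {P : Measure Ω | IsProbabilityMeasure P ∧ (P ≪ ℙ₀ ∧ ℙ₀ ≪ P)
      ∧ P.map X0 = μ₀ ∧ P.map X1 = μ₁
      ∧ Integrable (fun ω => Real.log ((P.rnDeriv ℙ₀ ω).toReal)) ℙ₀
      ∧ Integrable (fun ω => ((P.rnDeriv ℙ₀ ω).toReal) ^ 2) ℙ₀})
    (hPπ : Pπ = {P ∈ P₂ | P.map (fun ω => (X0 ω, X1 ω)) = π}) :
    Phat ∈ Pπ ∧
    relEnt Phat ℙ₀ = relEnt π ρ ∧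
    (∀ P ∈ Pπ, relEnt Phat ℙ₀ ≤ relEnt P ℙ₀) ∧
    (∀ P ∈ Pπ, relEnt P ℙ₀ = relEnt Phat ℙ₀ → P = Phat) :=
  stmt_9_general (m0 := m0) ℙ₀ μ₀ μ₁ X0 X1 hX0 hX1 ρ π hρ hequiv hπ0 hπ1 ζ hζ hζint Phat hPhat P₂ Pπ
    hP₂ hPπ
end
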